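/- Let A and B be Banach algebras and let φ : A → B and ψ : B → A be continuous algebra homomorphisms with φ ∘ ψ = id_B. If the bidual A** endowed with the first Arens product □ is approximately cyclic amenable, then (B**, □) is approximately cyclic amenable. -/

import Mathlib

open Filter Topology

noncomputable section

universe u v

variable {A : Type u} [NonUnitalNormedRing A] [NormedSpace ℂ A]
  [IsScalarTower ℂ A A] [SMulCommClass ℂ A A]

/-- The left module action of `A` on its dual `A*`: `(a · f) b = f (b * a)`. -/
def lAct (a : A) (f : A →L[ℂ] ℂ) : A →L[ℂ] ℂ :=
  f.comp ((ContinuousLinearMap.mul ℂ A).flip a)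

/-- The right module action of `A` on its dual `A*`: `(f · a) b = f (a * b)`. -/
def rAct (f : A →L[ℂ] ℂ) (a : A) : A →L[ℂ] ℂ :=
  f.comp (ContinuousLinearMap.mul ℂ A a)

/-- A bounded linear `D : A → A*` is a derivation if `D (a * b) = D a · b + a · D b`. -/
def IsDerivation (D : A →L[ℂ] (A →L[ℂ] ℂ)) : Prop :=
  ∀ a b : A, D (a * b) = rAct (D a) b + lAct a (D b)

/-- A derivation `D : A → A*` is cyclic if `⟨D a, b⟩ + ⟨D b, a⟩ = 0` for all `a, b`. -/
def IsCyclicDeriv (D : A →L[ℂ] (A →L[ℂ] ℂ)) : Prop :=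
  ∀ a b : A, D a b + D b a = 0

/-- `D : A → A*` is approximately inner if there is a net `(f i)` in `A*` with
`D a = lim_i (a · f i - f i · a)` in norm, for every `a ∈ A`. -/
def IsApproxInner {A : Type u} [NonUnitalNormedRing A] [NormedSpace ℂ A]
    [IsScalarTower ℂ A A] [SMulCommClass ℂ A A] (D : A →L[ℂ] (A →L[ℂ] ℂ)) : Prop :=
  ∃ (ι : Type u) (l : Filter ι) (f : ι → (A →L[ℂ] ℂ)), l.NeBot ∧
    ∀ a : A, Tendsto (fun i => lAct a (f i) - rAct (f i) a) l (𝓝 (D a))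

/-- `D : A → A*` is inner if `D a = a · f - f · a` for some fixed `f ∈ A*`. -/
def IsInner (D : A →L[ℂ] (A →L[ℂ] ℂ)) : Prop :=
  ∃ f : A →L[ℂ] ℂ, ∀ a : A, D a = lAct a f - rAct f a

/-- A Banach algebra is approximately cyclic amenable if every cyclic bounded
derivation `D : A → A*` is approximately inner. -/
def ApproxCyclicAmenable (A : Type u) [NonUnitalNormedRing A] [NormedSpace ℂ A]
    [IsScalarTower ℂ A A] [SMulCommClass ℂ A A] : Prop :=
  ∀ D : A →L[ℂ] (A →L[ℂ] ℂ), IsDerivation D → IsCyclicDeriv D → IsApproxInner D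

/-- A Banach algebra is cyclic amenable if every cyclic bounded derivation
`D : A → A*` is inner. -/
def CyclicAmenable (A : Type u) [NonUnitalNormedRing A] [NormedSpace ℂ A]
    [IsScalarTower ℂ A A] [SMulCommClass ℂ A A] : Prop :=
  ∀ D : A →L[ℂ] (A →L[ℂ] ℂ), IsDerivation D → IsCyclicDeriv D → IsInner D

/-- The bidual of `A`; below we install the first Arens product on it. -/
abbrev Bidual (A : Type u) [NormedAddCommGroup A] [NormedSpace ℂ A] : Type u :=
  (A →L[ℂ] ℂ) →L[ℂ] ℂ

namespace Bidual

variable (A)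

/-- `f ↦ (a ↦ f · a)` where `(f · a) b = f (a * b)`, as a continuous bilinear map. -/
def rActL : (A →L[ℂ] ℂ) →L[ℂ] A →L[ℂ] (A →L[ℂ] ℂ) :=
  (((ContinuousLinearMap.compL ℂ A (A →L[ℂ] A) (A →L[ℂ] ℂ)).flip
      (ContinuousLinearMap.mul ℂ A)).comp
    (ContinuousLinearMap.compL ℂ A A ℂ))

@[simp] lemma rActL_apply (f : A →L[ℂ] ℂ) (a b : A) : rActL A f a b = f (a * b) := rfl

/-- The action `G · f` of the bidual on the dual: `(G · f) a = G (f · a)`. -/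
def dotAct (G : Bidual A) : (A →L[ℂ] ℂ) →L[ℂ] (A →L[ℂ] ℂ) :=
  (ContinuousLinearMap.compL ℂ A (A →L[ℂ] ℂ) ℂ G).comp (rActL A)

@[simp] lemma dotAct_apply (G : Bidual A) (f : A →L[ℂ] ℂ) (a : A) :
    dotAct A G f a = G (rActL A f a) := rfl

variable {A}

/-- The first Arens product on the bidual: `⟨F □ G, f⟩ = ⟨F, G · f⟩`. -/
instance : Mul (Bidual A) := ⟨fun F G => F.comp (dotAct A G)⟩

@[simp] lemma mul_apply (F G : Bidual A) (f : A →L[ℂ] ℂ) :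
    (F * G) f = F (dotAct A G f) := rfl

lemma dotAct_add (G H : Bidual A) : dotAct A (G + H) = dotAct A G + dotAct A H := by
  refine ContinuousLinearMap.ext fun g => ContinuousLinearMap.ext fun a => ?_
  simp

lemma dotAct_zero : dotAct A (0 : Bidual A) = 0 := by
  refine ContinuousLinearMap.ext fun g => ContinuousLinearMap.ext fun a => ?_
  simp

lemma dotAct_smul (c : ℂ) (G : Bidual A) : dotAct A (c • G) = c • dotAct A G := by
  refine ContinuousLinearMap.ext fun g => ContinuousLinearMap.ext fun a => ?_
  simp

instance instNonUnitalRing : NonUnitalRing (Bidual A) where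
  __ := (inferInstance : AddCommGroup ((A →L[ℂ] ℂ) →L[ℂ] ℂ))
  mul := (· * ·)
  left_distrib F G H := by
    refine ContinuousLinearMap.ext fun f => ?_
    simp [dotAct_add]
  right_distrib F G H := by
    refine ContinuousLinearMap.ext fun f => ?_
    rfl
  zero_mul F := by refine ContinuousLinearMap.ext fun f => ?_; rfl
  mul_zero F := by
    refine ContinuousLinearMap.ext fun f => ?_
    simp [dotAct_zero]
  mul_assoc F G H := by
    refine ContinuousLinearMap.ext fun f => ?_
    show F _ = F _
    congr 1
    refine ContinuousLinearMap.ext fun a => ?_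
    show G _ = G _
    congr 1
    refine ContinuousLinearMap.ext fun b => ?_
    show H _ = H _
    congr 1
    refine ContinuousLinearMap.ext fun c => ?_
    exact congrArg f (mul_assoc a b c)

lemma norm_dotAct_apply_le (G : Bidual A) (f : A →L[ℂ] ℂ) :
    ‖dotAct A G f‖ ≤ ‖G‖ * ‖f‖ := by
  refine ContinuousLinearMap.opNorm_le_bound _ (by positivity) fun a => ?_
  calc ‖G (rActL A f a)‖ ≤ ‖G‖ * ‖rActL A f a‖ := G.le_opNorm _
    _ ≤ ‖G‖ * (‖f‖ * ‖a‖) := by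
        refine mul_le_mul_of_nonneg_left ?_ (norm_nonneg G)
        refine ContinuousLinearMap.opNorm_le_bound _ (by positivity) fun b => ?_
        calc ‖f (a * b)‖ ≤ ‖f‖ * ‖a * b‖ := f.le_opNorm _
          _ ≤ ‖f‖ * (‖a‖ * ‖b‖) :=
              mul_le_mul_of_nonneg_left (norm_mul_le a b) (norm_nonneg f)
          _ = ‖f‖ * ‖a‖ * ‖b‖ := by ring
    _ = ‖G‖ * ‖f‖ * ‖a‖ := by ring

instance instNonUnitalNormedRing : NonUnitalNormedRing (Bidual A) where
  __ := instNonUnitalRing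
  __ := (inferInstance : NormedAddCommGroup ((A →L[ℂ] ℂ) →L[ℂ] ℂ))
  norm_mul_le F G := by
    refine ContinuousLinearMap.opNorm_le_bound _ (by positivity) fun f => ?_
    calc ‖F (dotAct A G f)‖ ≤ ‖F‖ * ‖dotAct A G f‖ := F.le_opNorm _
      _ ≤ ‖F‖ * (‖G‖ * ‖f‖) :=
          mul_le_mul_of_nonneg_left (norm_dotAct_apply_le G f) (norm_nonneg F)
      _ = ‖F‖ * ‖G‖ * ‖f‖ := by ring

instance : IsScalarTower ℂ (Bidual A) (Bidual A) where
  smul_assoc c F G := by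
    refine ContinuousLinearMap.ext fun f => ?_
    rfl

instance : SMulCommClass ℂ (Bidual A) (Bidual A) where
  smul_comm c F G := by
    refine ContinuousLinearMap.ext fun f => ?_
    show c • (F (dotAct A G f)) = F (dotAct A (c • G) f)
    rw [dotAct_smul]
    simp

end Bidual

/-!
A derivation `D : B → B*` pulls back along the homomorphism `φ` to a cyclic derivation of `A`,
which is approximately inner by hypothesis; pushing the implementing net `fᵢ ∈ A*` forward
along `ψ*` gives a net implementing `D`, because `φ ∘ ψ = id`. Thus approximate cyclic
amenability passes to retracts, and `B**` is a retract of `A**` through the Arens-multiplicative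
maps `φ**` and `ψ**`.
-/

section Dual

variable {X Y : Type*} [NormedAddCommGroup X] [NormedSpace ℂ X]
  [NormedAddCommGroup Y] [NormedSpace ℂ Y]

def dualMap (φ : X →L[ℂ] Y) : (Y →L[ℂ] ℂ) →L[ℂ] (X →L[ℂ] ℂ) :=
  (ContinuousLinearMap.compL ℂ X Y ℂ).flip φ

def bidualMap (φ : X →L[ℂ] Y) : Bidual X →L[ℂ] Bidual Y :=
  dualMap (dualMap φ)

def pullbackDeriv (φ : X →L[ℂ] Y) (D : Y →L[ℂ] (Y →L[ℂ] ℂ)) : X →L[ℂ] (X →L[ℂ] ℂ) :=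
  (dualMap φ).comp (D.comp φ)

@[simp] lemma pullbackDeriv_apply (φ : X →L[ℂ] Y) (D : Y →L[ℂ] (Y →L[ℂ] ℂ)) (a b : X) :
    pullbackDeriv φ D a b = D (φ a) (φ b) := rfl

lemma pullbackDeriv_pullbackDeriv_of_leftInverse {φ : X →L[ℂ] Y} {ψ : Y →L[ℂ] X}
    (hφψ : Function.LeftInverse φ ψ) (D : Y →L[ℂ] (Y →L[ℂ] ℂ)) :
    pullbackDeriv ψ (pullbackDeriv φ D) = D := by
  refine ContinuousLinearMap.ext fun a => ContinuousLinearMap.ext fun b => ?_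
  simp only [pullbackDeriv_apply, hφψ a, hφψ b]

end Dual

section Retract

variable {X Y : Type*} [NonUnitalNormedRing X] [NormedSpace ℂ X]
  [NonUnitalNormedRing Y] [NormedSpace ℂ Y]

lemma IsCyclicDeriv.pullbackDeriv (φ : X →L[ℂ] Y) {D : Y →L[ℂ] (Y →L[ℂ] ℂ)}
    (hD : IsCyclicDeriv D) : IsCyclicDeriv (pullbackDeriv φ D) :=
  fun a b => hD (φ a) (φ b)

variable [IsScalarTower ℂ X X] [SMulCommClass ℂ X X] [IsScalarTower ℂ Y Y] [SMulCommClass ℂ Y Y]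

lemma bidualMap_mul (φ : X →L[ℂ] Y) (hφ : ∀ x y : X, φ (x * y) = φ x * φ y)
    (F G : Bidual X) : bidualMap φ (F * G) = bidualMap φ F * bidualMap φ G := by
  refine ContinuousLinearMap.ext fun h => congrArg F <| ContinuousLinearMap.ext fun a =>
    congrArg G <| ContinuousLinearMap.ext fun a' => ?_
  show h (φ (a * a')) = h (φ a * φ a')
  rw [hφ]

lemma IsDerivation.pullbackDeriv {φ : X →L[ℂ] Y} (hφ : ∀ x y : X, φ (x * y) = φ x * φ y)
    {D : Y →L[ℂ] (Y →L[ℂ] ℂ)} (hD : IsDerivation D) : IsDerivation (pullbackDeriv φ D) := by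
  intro a b
  refine ContinuousLinearMap.ext fun c => ?_
  show D (φ (a * b)) (φ c) = D (φ a) (φ (b * c)) + D (φ b) (φ (c * a))
  rw [hφ a b, hφ b c, hφ c a, hD (φ a) (φ b)]
  rfl

lemma lAct_dualMap_sub_rAct_dualMap {ψ : Y →L[ℂ] X} (hψ : ∀ x y : Y, ψ (x * y) = ψ x * ψ y)
    (b : Y) (g : X →L[ℂ] ℂ) :
    lAct b (dualMap ψ g) - rAct (dualMap ψ g) b = dualMap ψ (lAct (ψ b) g - rAct g (ψ b)) := by
  refine ContinuousLinearMap.ext fun c => ?_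
  show g (ψ (c * b)) - g (ψ (b * c)) = g (ψ c * ψ b) - g (ψ b * ψ c)
  rw [hψ, hψ]

/-- The index type of an implementing net may live in any universe: it can be replaced by
the set of its values in `Y*`. -/
lemma IsApproxInner.of_tendsto {ι : Type*} {l : Filter ι} (hl : l.NeBot)
    {D : Y →L[ℂ] (Y →L[ℂ] ℂ)} (f : ι → (Y →L[ℂ] ℂ))
    (hf : ∀ a, Tendsto (fun i => lAct a (f i) - rAct (f i) a) l (𝓝 (D a))) :
    IsApproxInner D :=
  ⟨Y →L[ℂ] ℂ, l.map f, id, hl.map f, fun a => tendsto_map'_iff.mpr (hf a)⟩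

lemma IsApproxInner.pullbackDeriv {ψ : Y →L[ℂ] X} (hψ : ∀ x y : Y, ψ (x * y) = ψ x * ψ y)
    {E : X →L[ℂ] (X →L[ℂ] ℂ)} (hE : IsApproxInner E) : IsApproxInner (pullbackDeriv ψ E) := by
  obtain ⟨ι, l, f, hl, hf⟩ := hE
  refine IsApproxInner.of_tendsto hl (fun i => dualMap ψ (f i)) fun b => ?_
  simp only [lAct_dualMap_sub_rAct_dualMap hψ]
  exact ((dualMap ψ).continuous.tendsto _).comp (hf (ψ b))

lemma ApproxCyclicAmenable.of_retract (φ : X →L[ℂ] Y) (hφ : ∀ x y : X, φ (x * y) = φ x * φ y)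
    (ψ : Y →L[ℂ] X) (hψ : ∀ x y : Y, ψ (x * y) = ψ x * ψ y) (hφψ : Function.LeftInverse φ ψ)
    (hX : ApproxCyclicAmenable X) : ApproxCyclicAmenable Y := by
  intro D hD hDc
  rw [← pullbackDeriv_pullbackDeriv_of_leftInverse hφψ D]
  exact (hX _ (hD.pullbackDeriv hφ) (hDc.pullbackDeriv φ)).pullbackDeriv hψ

end Retract

theorem bidual_approxCyclicAmenable_of_retract_general
    {A : Type u} {B : Type v} [NonUnitalNormedRing A] [NormedSpace ℂ A]
    [IsScalarTower ℂ A A] [SMulCommClass ℂ A A]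
    [NonUnitalNormedRing B] [NormedSpace ℂ B]
    [IsScalarTower ℂ B B] [SMulCommClass ℂ B B]
    (φ : A →L[ℂ] B) (hφ : ∀ x y : A, φ (x * y) = φ x * φ y)
    (ψ : B →L[ℂ] A) (hψ : ∀ x y : B, ψ (x * y) = ψ x * ψ y)
    (hcomp : ∀ b : B, φ (ψ b) = b)
    (hA : ApproxCyclicAmenable (Bidual A)) : ApproxCyclicAmenable (Bidual B) := by
  have hφψ : φ.comp ψ = ContinuousLinearMap.id ℂ B := ContinuousLinearMap.ext hcomp
  have hbidual : Function.LeftInverse (bidualMap φ) (bidualMap ψ) := fun G =>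
    congrArg (fun θ => bidualMap θ G) hφψ
  exact hA.of_retract (bidualMap φ) (bidualMap_mul φ hφ) (bidualMap ψ) (bidualMap_mul ψ hψ)
    hbidual

/-- If `φ : A → B` and `ψ : B → A` are continuous algebra homomorphisms
between Banach algebras with `φ ∘ ψ = id` and `(A**, □)` is approximately cyclic amenable,
then `(B**, □)` is approximately cyclic amenable. -/
theorem bidual_approxCyclicAmenable_of_retract
    {A : Type u} {B : Type v} [NonUnitalNormedRing A] [NormedSpace ℂ A]
    [IsScalarTower ℂ A A] [SMulCommClass ℂ A A] [CompleteSpace A]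
    [NonUnitalNormedRing B] [NormedSpace ℂ B]
    [IsScalarTower ℂ B B] [SMulCommClass ℂ B B] [CompleteSpace B]
    (φ : A →L[ℂ] B) (hφ : ∀ x y : A, φ (x * y) = φ x * φ y)
    (ψ : B →L[ℂ] A) (hψ : ∀ x y : B, ψ (x * y) = ψ x * ψ y)
    (hcomp : ∀ b : B, φ (ψ b) = b)
    (hA : ApproxCyclicAmenable (Bidual A)) : ApproxCyclicAmenable (Bidual B) :=
  bidual_approxCyclicAmenable_of_retract_general φ hφ ψ hψ hcomp hA
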